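/- For all real a > 0, b > 0, δ > 0, c ≥ 0 and t > 0, the integral L₁(a,b,c,δ,t) = ∫_t^∞ x^c e^{−δx} [1 − (1 + b + bx + b²x²/2) e^{−bx}/(1+b)]^{a−1} dx converges and equals Σ_{i=0}^∞ Σ_{j=0}^{i} Σ_{k=0}^{j} Σ_{l=0}^{k} C(a−1, i) C(i, j) C(j, k) C(k, l) (−1)^i b^j (b/2)^l Γ(c+k+l+1, t(b i + δ)) / (b i + δ)^{c+k+l+1}, where the series over i converges. -/

import Mathlib

open Real MeasureTheory Set Filter Topology

/-- The xgamma CDF bracket: `U θ x = 1 - (1 + θ + θx + θ²x²/2) e^{-θx}/(1+θ)`. -/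
noncomputable def U (θ x : ℝ) : ℝ :=
  1 - (1 + θ + θ * x + θ ^ 2 * x ^ 2 / 2) * Real.exp (-θ * x) / (1 + θ)

/-- Generalized binomial coefficient `C(a, i) = a(a-1)⋯(a-i+1)/i!`. -/
noncomputable def genChoose (a : ℝ) (i : ℕ) : ℝ :=
  (∏ j ∈ Finset.range i, (a - j)) / (Nat.factorial i)

/-- Upper incomplete gamma function `Γ(s, x) = ∫_x^∞ u^{s-1} e^{-u} du`. -/
noncomputable def uGamma (s x : ℝ) : ℝ :=
  ∫ u in Set.Ioi x, u ^ (s - 1) * Real.exp (-u)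

/-- The `i`-th term (a triple finite sum) of the series for `L₁(a,b,c,δ,t)`. -/
noncomputable def L1term (a b c δ t : ℝ) (i : ℕ) : ℝ :=
  ∑ j ∈ Finset.range (i + 1), ∑ k ∈ Finset.range (j + 1), ∑ l ∈ Finset.range (k + 1),
    genChoose (a - 1) i * (i.choose j) * (j.choose k) * (k.choose l) *
      (-1 : ℝ) ^ i * b ^ j * (b / 2) ^ l *
      uGamma (c + k + l + 1) (t * (b * i + δ)) /
      ((1 + b) ^ i * (b * i + δ) ^ (c + (k : ℝ) + l + 1))

/-!
Write `U b = 1 - S` with `S` the survival function of the xgamma distribution. Since `S`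
is strictly decreasing with `S 0 = 1`, on `(t, ∞)` we have `0 ≤ S ≤ S t < 1`, so the
binomial series `(1 - S x)^(a-1) = ∑ C(a-1, i) (-S x)^i` is dominated by
`∑ |C(a-1, i)| (S t)^i · x^c e^{-δx}`, which justifies integrating termwise. Expanding `S^i`
by the binomial theorem three times makes each term a finite combination of
`x^(c+k+l) e^{-(bi+δ)x}`, whose integrals over `(t, ∞)` are incomplete gamma values.
-/

lemma genChoose_eq_ringChoose (r : ℝ) (n : ℕ) : genChoose r n = Ring.choose r n := by
  rw [Ring.choose_eq_smul, genChoose, ← Polynomial.aeval_eq_smeval, Polynomial.aeval_def,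
    Polynomial.eval₂_eq_eval_map, descPochhammer_map, descPochhammer_eval_eq_prod_range,
    smul_eq_mul, div_eq_inv_mul]

lemma hasSum_genChoose_mul_pow (r : ℝ) {x : ℝ} (hx : |x| < 1) :
    HasSum (fun n => genChoose r n * x ^ n) ((1 + x) ^ r) := by
  have := (Real.one_add_rpow_hasFPowerSeriesOnBall_zero (a := r)).hasSum (y := x)
    (by simpa [enorm_eq_nnnorm, ← NNReal.coe_lt_coe] using hx)
  simpa [FormalMultilinearSeries.ofScalars_apply_eq, binomialSeries, genChoose_eq_ringChoose,
    mul_comm] using this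

lemma summable_abs_genChoose_mul_pow (r : ℝ) {q : ℝ} (hq : |q| < 1) :
    Summable (fun n => |genChoose r n| * |q| ^ n) := by
  have h := (binomialSeries ℝ r).summable_norm_mul_pow (r := ‖q‖₊) <|
    lt_of_lt_of_le (by simpa [← NNReal.coe_lt_coe] using hq)
      Real.one_add_rpow_hasFPowerSeriesOnBall_zero.r_le
  simpa [binomialSeries, FormalMultilinearSeries.ofScalars_norm, genChoose_eq_ringChoose]
    using h

theorem integrable_and_hasSum_integral_one_add_rpow_mul {α : Type*} [MeasurableSpace α]
    {μ : Measure α} {g w : α → ℝ} (r : ℝ) {q : ℝ} (hq : q < 1)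
    (hg : AEStronglyMeasurable g μ) (hgq : ∀ᵐ x ∂μ, |g x| ≤ q) (hw : Integrable w μ) :
    Integrable (fun x => (1 + g x) ^ r * w x) μ ∧
      HasSum (fun n => ∫ x, genChoose r n * g x ^ n * w x ∂μ)
        (∫ x, (1 + g x) ^ r * w x ∂μ) := by
  set p := max q 0
  have hp : |p| < 1 := by rw [abs_of_nonneg (le_max_right q 0)]; exact max_lt hq one_pos
  have hgp : ∀ᵐ x ∂μ, |g x| ≤ p := hgq.mono fun x hx => hx.trans (le_max_left q 0)
  set K := ∑' n, |genChoose r n| * |p| ^ n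
  have hK : HasSum (fun n => |genChoose r n| * |p| ^ n) K :=
    (summable_abs_genChoose_mul_pow r hp).hasSum
  have hterm_le : ∀ n, ∀ᵐ x ∂μ,
      ‖genChoose r n * g x ^ n * w x‖ ≤ |genChoose r n| * |p| ^ n * ‖w x‖ := by
    intro n
    filter_upwards [hgp] with x hx
    rw [norm_mul, norm_mul, norm_pow, Real.norm_eq_abs, Real.norm_eq_abs]
    gcongr |genChoose r n| * ?_ ^ n * _
    exact hx.trans (le_abs_self p)
  have hpoint : ∀ᵐ x ∂μ,
      HasSum (fun n => genChoose r n * g x ^ n * w x) ((1 + g x) ^ r * w x) := by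
    filter_upwards [hgp] with x hx
    exact (hasSum_genChoose_mul_pow r ((hx.trans (le_abs_self p)).trans_lt hp)).mul_right (w x)
  have hmeas : AEStronglyMeasurable (fun x => (1 + g x) ^ r * w x) μ :=
    ((aemeasurable_const.add hg.aemeasurable).pow_const r).aestronglyMeasurable.mul hw.1
  refine ⟨(hw.norm.const_mul K).mono' hmeas ?_, ?_⟩
  · filter_upwards [hpoint, ae_all_iff.2 hterm_le] with x hx hle
    exact hx.norm_le_of_bounded (hK.mul_right ‖w x‖) hle
  · refine hasSum_integral_of_dominated_convergence
      (fun n x => |genChoose r n| * |p| ^ n * ‖w x‖)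
      (fun n => ((hg.pow n).const_mul _).mul hw.1) hterm_le
      (ae_of_all _ fun x => (hK.mul_right _).summable) ?_ hpoint
    simpa only [tsum_mul_right] using hw.norm.const_mul K

lemma integrableOn_rpow_mul_exp_neg_mul_Ioi (s : ℝ) {μ T : ℝ} (hμ : 0 < μ) (hT : 0 < T) :
    IntegrableOn (fun x : ℝ => x ^ s * exp (-μ * x)) (Ioi T) := by
  refine integrable_of_isBigO_exp_neg (half_pos hμ)
    ((continuousOn_id.rpow_const fun x hx => Or.inl (hT.trans_le hx).ne').mul (by fun_prop)) ?_
  have hsplit : (fun x : ℝ => x ^ s * exp (-μ * x))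
      = fun x => (x ^ s * exp (-(μ / 2) * x)) * exp (-(μ / 2) * x) := by
    ext x; rw [mul_assoc, ← exp_add]; ring_nf
  rw [hsplit]
  simpa using
    ((tendsto_rpow_mul_exp_neg_mul_atTop_nhds_zero s _ (half_pos hμ)).isBigO_one ℝ).mul
      (Asymptotics.isBigO_refl (fun x : ℝ => exp (-(μ / 2) * x)) atTop)

lemma integral_rpow_mul_exp_neg_mul_Ioi_eq_uGamma (s : ℝ) {μ T : ℝ} (hμ : 0 < μ) (hT : 0 ≤ T) :
    ∫ x in Ioi T, x ^ s * exp (-μ * x) = uGamma (s + 1) (T * μ) / μ ^ (s + 1) := by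
  have hscale := integral_comp_mul_left_Ioi' (fun u : ℝ => u ^ s * exp (-u)) T hμ
  have hmul : ∫ x in Ioi T, (μ * x) ^ s * exp (-(μ * x))
      = μ ^ s * ∫ x in Ioi T, x ^ s * exp (-μ * x) := by
    rw [← integral_const_mul]
    refine setIntegral_congr_fun measurableSet_Ioi fun x hx => ?_
    rw [mul_rpow hμ.le (hT.trans hx.le), neg_mul]; ring
  rw [hmul, smul_eq_mul, ← mul_assoc, mul_comm μ, ← rpow_add_one hμ.ne'] at hscale
  rw [uGamma, add_sub_cancel_right, mul_comm T, ← hscale, mul_div_cancel_left₀ _ (by positivity)]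

noncomputable def xgammaSurvival (θ x : ℝ) : ℝ :=
  (1 + θ + θ * x + θ ^ 2 * x ^ 2 / 2) * exp (-θ * x) / (1 + θ)

lemma U_eq_one_sub_xgammaSurvival (θ x : ℝ) : U θ x = 1 - xgammaSurvival θ x := rfl

lemma xgammaSurvival_zero {θ : ℝ} (hθ : 1 + θ ≠ 0) : xgammaSurvival θ 0 = 1 := by
  simp [xgammaSurvival, hθ]

lemma hasDerivAt_xgammaSurvival (θ x : ℝ) :
    HasDerivAt (xgammaSurvival θ)
      (-(θ ^ 2 * (1 + θ * x ^ 2 / 2)) * exp (-θ * x) / (1 + θ)) x := by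
  have hpoly : HasDerivAt (fun y => 1 + θ + θ * y + θ ^ 2 * y ^ 2 / 2) (θ + θ ^ 2 * x) x :=
    ((((hasDerivAt_id' x).const_mul θ).const_add (1 + θ)).add
      (((hasDerivAt_pow 2 x).const_mul (θ ^ 2)).div_const 2)).congr_deriv (by push_cast; ring)
  have hexp : HasDerivAt (fun y => exp (-θ * y)) (exp (-θ * x) * (-θ)) x :=
    ((hasDerivAt_id' x).const_mul (-θ)).exp.congr_deriv (by ring)
  exact ((hpoly.mul hexp).div_const (1 + θ)).congr_deriv (by ring)

lemma xgammaSurvival_strictAnti {θ : ℝ} (hθ : 0 < θ) : StrictAnti (xgammaSurvival θ) :=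
  strictAnti_of_deriv_neg fun x => by
    rw [(hasDerivAt_xgammaSurvival θ x).deriv]
    have : 0 < θ ^ 2 * (1 + θ * x ^ 2 / 2) := by positivity
    exact div_neg_of_neg_of_pos (mul_neg_of_neg_of_pos (neg_neg_of_pos this) (exp_pos _))
      (by linarith)

lemma xgammaSurvival_nonneg {θ x : ℝ} (hθ : 0 ≤ θ) (hx : 0 ≤ x) : 0 ≤ xgammaSurvival θ x := by
  unfold xgammaSurvival; positivity

lemma xgammaSurvival_lt_one {θ x : ℝ} (hθ : 0 < θ) (hx : 0 < x) : xgammaSurvival θ x < 1 := by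
  simpa [xgammaSurvival_zero (by linarith : 1 + θ ≠ 0)] using xgammaSurvival_strictAnti hθ hx

lemma trinomial_pow_eq_triple_sum (b x : ℝ) (i : ℕ) :
    (1 + b + b * x + b ^ 2 * x ^ 2 / 2) ^ i
      = ∑ j ∈ Finset.range (i + 1), ∑ k ∈ Finset.range (j + 1), ∑ l ∈ Finset.range (k + 1),
          (i.choose j : ℝ) * j.choose k * k.choose l * b ^ j * (b / 2) ^ l * x ^ (k + l) := by
  have hpow (y : ℝ) (n : ℕ) :
      (y + 1) ^ n = ∑ m ∈ Finset.range (n + 1), (n.choose m : ℝ) * y ^ m := by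
    simp [add_pow, mul_comm]
  rw [show 1 + b + b * x + b ^ 2 * x ^ 2 / 2 = b * (x * (b / 2 * x + 1) + 1) + 1 by ring, hpow]
  refine Finset.sum_congr rfl fun j _ => ?_
  rw [mul_pow, hpow, Finset.mul_sum, Finset.mul_sum]
  refine Finset.sum_congr rfl fun k _ => ?_
  rw [mul_pow, hpow]
  simp only [Finset.mul_sum]
  refine Finset.sum_congr rfl fun l _ => ?_
  ring

lemma neg_xgammaSurvival_pow_mul_eq_sum (b c δ : ℝ) {x : ℝ} (hx : 0 < x) (i : ℕ) :
    (-xgammaSurvival b x) ^ i * (x ^ c * exp (-δ * x))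
      = ∑ j ∈ Finset.range (i + 1), ∑ k ∈ Finset.range (j + 1), ∑ l ∈ Finset.range (k + 1),
          (-1) ^ i * (i.choose j : ℝ) * j.choose k * k.choose l * b ^ j * (b / 2) ^ l
            / (1 + b) ^ i * (x ^ (c + k + l) * exp (-(b * i + δ) * x)) := by
  have hrpow (k l : ℕ) : x ^ (c + k + l) = x ^ c * x ^ (k + l) := by
    rw [add_assoc, rpow_add hx, ← Nat.cast_add, rpow_natCast]
  have hexp : exp (-(b * i + δ) * x) = exp (-b * x) ^ i * exp (-δ * x) := by
    rw [← exp_nat_mul, ← exp_add]; ring_nf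
  rw [neg_pow, xgammaSurvival, div_pow, mul_pow, trinomial_pow_eq_triple_sum]
  simp only [Finset.sum_mul, Finset.mul_sum, Finset.sum_div]
  refine Finset.sum_congr rfl fun j _ => Finset.sum_congr rfl fun k _ =>
    Finset.sum_congr rfl fun l _ => ?_
  rw [hrpow, hexp]
  ring

lemma integral_genChoose_mul_neg_xgammaSurvival_pow_eq_L1term (a c : ℝ) {b δ t : ℝ}
    (hb : 0 ≤ b) (hδ : 0 < δ) (ht : 0 < t) (i : ℕ) :
    ∫ x in Ioi t, genChoose (a - 1) i * (-xgammaSurvival b x) ^ i * (x ^ c * exp (-δ * x))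
      = L1term a b c δ t i := by
  have hμ : 0 < b * i + δ := by positivity
  have hint (k l : ℕ) (C : ℝ) :
      IntegrableOn (fun x => C * (x ^ (c + k + l) * exp (-(b * i + δ) * x))) (Ioi t) :=
    (integrableOn_rpow_mul_exp_neg_mul_Ioi _ hμ ht).const_mul C
  simp_rw [mul_assoc (genChoose (a - 1) i)]
  rw [integral_const_mul, setIntegral_congr_fun measurableSet_Ioi
    fun x hx => neg_xgammaSurvival_pow_mul_eq_sum b c δ (ht.trans hx) i,
    integral_finsetSum _ fun j _ => integrable_finsetSum _ fun k _ =>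
      integrable_finsetSum _ fun l _ => hint k l _, L1term, Finset.mul_sum]
  refine Finset.sum_congr rfl fun j _ => ?_
  rw [integral_finsetSum _ fun k _ => integrable_finsetSum _ fun l _ => hint k l _,
    Finset.mul_sum]
  refine Finset.sum_congr rfl fun k _ => ?_
  rw [integral_finsetSum _ fun l _ => hint k l _, Finset.mul_sum]
  refine Finset.sum_congr rfl fun l _ => ?_
  rw [integral_const_mul, integral_rpow_mul_exp_neg_mul_Ioi_eq_uGamma _ hμ ht.le]
  ring

theorem L1_integral_eq_series_general (a b c δ t : ℝ) (hb : 0 < b) (hδ : 0 < δ) (ht : 0 < t) :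
    IntegrableOn (fun x : ℝ => x ^ c * Real.exp (-δ * x) * (U b x) ^ (a - 1))
      (Set.Ioi t) ∧
    HasSum (fun i : ℕ => L1term a b c δ t i)
      (∫ x in Set.Ioi t, x ^ c * Real.exp (-δ * x) * (U b x) ^ (a - 1)) := by
  have hU : (fun x : ℝ => x ^ c * exp (-δ * x) * U b x ^ (a - 1))
      = fun x => (1 + -xgammaSurvival b x) ^ (a - 1) * (x ^ c * exp (-δ * x)) := by
    ext x; rw [U_eq_one_sub_xgammaSurvival, ← sub_eq_add_neg, mul_comm]
  have hbound :
      ∀ᵐ x ∂volume.restrict (Ioi t), |-xgammaSurvival b x| ≤ xgammaSurvival b t := by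
    filter_upwards [ae_restrict_mem measurableSet_Ioi] with x hx
    rw [abs_neg, abs_of_nonneg (xgammaSurvival_nonneg hb.le (ht.trans hx).le)]
    exact (xgammaSurvival_strictAnti hb).antitone hx.le
  have hcont : Continuous (xgammaSurvival b) :=
    continuous_iff_continuousAt.2 fun x => (hasDerivAt_xgammaSurvival b x).continuousAt
  obtain ⟨hint, hsum⟩ := integrable_and_hasSum_integral_one_add_rpow_mul
    (g := fun x => -xgammaSurvival b x) (a - 1)
    (xgammaSurvival_lt_one hb ht) hcont.neg.aestronglyMeasurable hbound
    (integrableOn_rpow_mul_exp_neg_mul_Ioi c hδ ht)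
  rw [hU]
  refine ⟨hint, ?_⟩
  simpa only [integral_genChoose_mul_neg_xgammaSurvival_pow_eq_L1term a c hb.le hδ ht]
    using hsum

theorem L1_integral_eq_series (a b c δ t : ℝ) (ha : 0 < a) (hb : 0 < b) (hδ : 0 < δ)
    (hc : 0 ≤ c) (ht : 0 < t) :
    IntegrableOn (fun x : ℝ => x ^ c * Real.exp (-δ * x) * (U b x) ^ (a - 1))
      (Set.Ioi t) ∧
    HasSum (fun i : ℕ => L1term a b c δ t i)
      (∫ x in Set.Ioi t, x ^ c * Real.exp (-δ * x) * (U b x) ^ (a - 1)) :=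
  L1_integral_eq_series_general a b c δ t hb hδ ht
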